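/- arXiv:1611.06080 — 4 statements merged into one kernel-verified Lean document; each statement's English description precedes it below -/
import Mathlib

section
/- Let d ∈ ℕ, let ℓ₁,…,ℓ_d > 0 be lengthscales, let σ_s² > 0, and let x, x' ∈ ℝ^d. Then the integral of the function r ↦ σ_s² · cos(2π · Σ_{j=1}^d r_j (x_j − x'_j)) with respect to the product measure ⨂_{j=1}^d of Gaussian measures with mean 0 and variance 1/(4π²ℓ_j²) equals σ_s² · exp(−(1/2) Σ_{j=1}^d (x_j − x'_j)²/ℓ_j²). -/
/-!
The cosine is the real part of `r ↦ exp (i ⟨r, t⟩)` with `t = 2π (x - x')`, whose integral against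
a product measure is the product of the one-dimensional characteristic functions; for the centred
Gaussian of variance `vⱼ = 1 / (4π²ℓⱼ²)` these are `exp (-vⱼ tⱼ² / 2) = exp (-(xⱼ - x'ⱼ)² / (2ℓⱼ²))`.
-/

open MeasureTheory ProbabilityTheory Real Complex

theorem integral_cos_eq_re_integral_cexp {α : Type*} [MeasurableSpace α] {μ : Measure α}
    [IsFiniteMeasure μ] {g : α → ℝ} (hg : AEMeasurable g μ) :
    ∫ a, Real.cos (g a) ∂μ = (∫ a, cexp (g a * I) ∂μ).re := by
  have hint : Integrable (fun a ↦ cexp (g a * I)) μ := by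
    refine (integrable_const (1 : ℝ)).mono' (by fun_prop) (ae_of_all _ fun a ↦ ?_)
    rw [norm_exp_ofReal_mul_I]
  rw [← RCLike.re_to_complex, ← integral_re hint]
  simp_rw [RCLike.re_to_complex, exp_ofReal_mul_I_re]

theorem integral_cexp_sum_mul_I_pi {ι : Type*} [Fintype ι] (μ : ι → Measure ℝ)
    [∀ i, SigmaFinite (μ i)] (t : ι → ℝ) :
    ∫ r : ι → ℝ, cexp ((∑ i, r i * t i : ℝ) * I) ∂Measure.pi μ = ∏ i, charFun (μ i) (t i) := by
  simp_rw [ofReal_sum, Finset.sum_mul, Complex.exp_sum]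
  rw [integral_fintype_prod_eq_prod fun i y ↦ cexp ((y * t i : ℝ) * I)]
  refine Finset.prod_congr rfl fun i _ ↦ ?_
  simp_rw [charFun_apply_real, ofReal_mul, mul_comm (t i : ℂ)]

theorem integral_cos_sum_mul_pi_gaussianReal {ι : Type*} [Fintype ι] (v : ι → NNReal)
    (t : ι → ℝ) :
    ∫ r : ι → ℝ, Real.cos (∑ i, r i * t i) ∂Measure.pi (fun i ↦ gaussianReal 0 (v i))
      = Real.exp (-∑ i, v i * t i ^ 2 / 2) := by
  rw [integral_cos_eq_re_integral_cexp (by fun_prop : Measurable _).aemeasurable,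
    integral_cexp_sum_mul_I_pi]
  simp_rw [charFun_gaussianReal, ofReal_zero, mul_zero, zero_mul, zero_sub, ← Complex.exp_sum,
    ← Finset.sum_neg_distrib]
  norm_cast

theorem se_kernel_eq_integral_cos_general (d : ℕ) (ℓ : Fin d → ℝ)
    (σs2 : ℝ) (x x' : Fin d → ℝ) :
    ∫ r : Fin d → ℝ,
        σs2 * Real.cos (2 * π * ∑ j, r j * (x j - x' j))
        ∂(Measure.pi fun j =>
            gaussianReal 0 (Real.toNNReal (1 / (4 * π ^ 2 * (ℓ j) ^ 2))))
      = σs2 * Real.exp (-(1 / 2) * ∑ j, (x j - x' j) ^ 2 / (ℓ j) ^ 2) := by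
  simp_rw [Finset.mul_sum, ← mul_assoc, mul_comm (2 * π), mul_assoc _ (2 * π)]
  rw [integral_const_mul, integral_cos_sum_mul_pi_gaussianReal]
  congr 2
  rw [← Finset.sum_neg_distrib]
  refine Finset.sum_congr rfl fun j _ ↦ ?_
  have h2π : (2 * π) ^ 2 ≠ 0 := by positivity
  rw [Real.coe_toNNReal _ (by positivity)]
  -- cancel `(2π)²`, not `ℓ j ^ 2`, which may vanish (with `1 / 0 = 0`)
  calc -(1 / (4 * π ^ 2 * ℓ j ^ 2) * (2 * π * (x j - x' j)) ^ 2 / 2)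
      = -((2 * π) ^ 2 * (x j - x' j) ^ 2 / ((2 * π) ^ 2 * ℓ j ^ 2) / 2) := by ring
    _ = -(1 / 2) * ((x j - x' j) ^ 2 / ℓ j ^ 2) := by rw [mul_div_mul_left _ _ h2π]; ring

/-- The squared exponential kernel is the expectation of
`r ↦ σs² · cos (2π ⟨r, x − x'⟩)` when `r` is drawn from the product of the
coordinate Gaussian spectral measures `N(0, 1/(4π²ℓⱼ²))`. -/
theorem se_kernel_eq_integral_cos (d : ℕ) (ℓ : Fin d → ℝ) (hℓ : ∀ j, 0 < ℓ j)
    (σs2 : ℝ) (hσ : 0 < σs2) (x x' : Fin d → ℝ) :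
    ∫ r : Fin d → ℝ,
        σs2 * Real.cos (2 * π * ∑ j, r j * (x j - x' j))
        ∂(Measure.pi fun j =>
            gaussianReal 0 (Real.toNNReal (1 / (4 * π ^ 2 * (ℓ j) ^ 2))))
      = σs2 * Real.exp (-(1 / 2) * ∑ j, (x j - x' j) ^ 2 / (ℓ j) ^ 2) :=
  se_kernel_eq_integral_cos_general d ℓ σs2 x x'
end

section
/- Let Φ be a real q×n matrix, let Λ be a real symmetric positive definite q×q matrix, and let σ > 0. Define Γ := Φ Φᵀ + σ² Λ⁻¹. Then Φᵀ Λ Φ + σ²·I (an n×n matrix) and Γ are both invertible, and (Φᵀ Λ Φ + σ²·I)⁻¹ = σ⁻² · (I − Φᵀ Γ⁻¹ Φ). -/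
open Matrix

/-! With `Γ := V U + c Λ⁻¹`, the push-through identity `(U Λ V + c I) U = U Λ Γ` shows that
`(U Λ V + c I)(I - U Γ⁻¹ V) = c I`; everything else is positive definiteness. -/

section PushThrough

variable {K : Type*} [Field K] {q n : Type*} [Fintype q] [Fintype n] [DecidableEq q]
  [DecidableEq n] (U : Matrix n q K) (V : Matrix q n K) {Λ : Matrix q q K}

theorem add_smul_one_mul_eq_mul_mul_add_smul_inv (hΛ : IsUnit Λ.det) (c : K) :
    (U * Λ * V + c • 1) * U = U * Λ * (V * U + c • Λ⁻¹) := by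
  rw [Matrix.add_mul, Matrix.mul_add, Matrix.mul_smul, Matrix.mul_assoc U Λ Λ⁻¹,
    mul_nonsing_inv Λ hΛ, Matrix.mul_one, Matrix.smul_mul, Matrix.one_mul,
    Matrix.mul_assoc (U * Λ)]

theorem inv_mul_mul_add_smul_one_eq (hΛ : IsUnit Λ.det) {c : K} (hc : c ≠ 0)
    (hΓ : IsUnit (V * U + c • Λ⁻¹).det) :
    (U * Λ * V + c • 1)⁻¹ = c⁻¹ • (1 - U * (V * U + c • Λ⁻¹)⁻¹ * V) := by
  refine inv_eq_right_inv ?_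
  have hcancel : (U * Λ * V + c • 1) * (U * (V * U + c • Λ⁻¹)⁻¹ * V) = U * Λ * V := by
    rw [← Matrix.mul_assoc, ← Matrix.mul_assoc,
      add_smul_one_mul_eq_mul_mul_add_smul_inv U V hΛ,
      Matrix.mul_assoc (U * Λ), mul_nonsing_inv _ hΓ, Matrix.mul_one]
  rw [Matrix.mul_smul, Matrix.mul_sub, Matrix.mul_one, hcancel, add_sub_cancel_left, smul_smul,
    inv_mul_cancel₀ hc, one_smul]

end PushThrough

/-- Matrix inversion lemma identity for the sparse spectrum GP:
with `Γ := Φ Φᵀ + σ² Λ⁻¹`, both `Φᵀ Λ Φ + σ² I` and `Γ` are invertible and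
`(Φᵀ Λ Φ + σ² I)⁻¹ = σ⁻² (I − Φᵀ Γ⁻¹ Φ)`. -/
theorem matrix_inversion_lemma_ssgp {q n : Type*} [Fintype q] [Fintype n]
    [DecidableEq q] [DecidableEq n]
    (Φ : Matrix q n ℝ) (Λ : Matrix q q ℝ) (hΛ : Λ.PosDef)
    (σ : ℝ) (hσ : 0 < σ) :
    IsUnit (Φᵀ * Λ * Φ + σ ^ 2 • (1 : Matrix n n ℝ)).det ∧
    IsUnit (Φ * Φᵀ + σ ^ 2 • Λ⁻¹).det ∧
    (Φᵀ * Λ * Φ + σ ^ 2 • (1 : Matrix n n ℝ))⁻¹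
      = σ⁻¹ ^ 2 • ((1 : Matrix n n ℝ) - Φᵀ * (Φ * Φᵀ + σ ^ 2 • Λ⁻¹)⁻¹ * Φ) := by
  have hσ2 : 0 < σ ^ 2 := pow_pos hσ 2
  have hΞ : (Φᵀ * Λ * Φ + σ ^ 2 • (1 : Matrix n n ℝ)).PosDef :=
    PosDef.posSemidef_add (hΛ.posSemidef.conjTranspose_mul_mul_same Φ) (PosDef.one.smul hσ2)
  have hΓ : (Φ * Φᵀ + σ ^ 2 • Λ⁻¹).PosDef :=
    PosDef.posSemidef_add (posSemidef_self_mul_conjTranspose Φ) (hΛ.inv.smul hσ2)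
  have hΓ_det : IsUnit (Φ * Φᵀ + σ ^ 2 • Λ⁻¹).det := hΓ.det_pos.ne'.isUnit
  refine ⟨hΞ.det_pos.ne'.isUnit, hΓ_det, ?_⟩
  rw [inv_pow]
  exact inv_mul_mul_add_smul_one_eq Φᵀ Φ hΛ.det_pos.ne'.isUnit hσ2.ne' hΓ_det
end

section
/- Let m ∈ ℝ, v ≥ 0, and γ ∈ ℝ with |γ| ≤ 1. Then the Gaussian mixture obtained by drawing x from the Gaussian measure with mean m and variance v and then returning a sample from the Gaussian measure with mean γ·x + (1−γ)·m and variance (1−γ²)·v equals the Gaussian measure with mean m and variance v; formally, (gaussianReal m v).bind (fun x => gaussianReal (γ·x + (1−γ)·m) ((1−γ²)·v)) = gaussianReal m v. -/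
open MeasureTheory ProbabilityTheory
open scoped NNReal

/-!
The affine map `x ↦ γ x + (1 - γ) m` pushes `N(m, v)` forward to `N(m, γ² v)`, and the kernel
`y ↦ N(y, (1 - γ²) v)` adds independent centred Gaussian noise, i.e. convolves with
`N(0, (1 - γ²) v)`. Variances add under convolution, and `γ² v + (1 - γ²) v = v`.
-/

namespace MeasureTheory.Measure

variable {α β γ : Type*} [MeasurableSpace α] [MeasurableSpace β] [MeasurableSpace γ]

lemma bind_map {μ : Measure α} {f : α → β} {g : β → Measure γ} (hf : Measurable f)
    (hg : Measurable g) : (μ.map f).bind g = μ.bind (g ∘ f) := by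
  rw [bind, bind, map_map hg hf]

variable {M : Type*} [AddMonoid M] [MeasurableSpace M] [MeasurableAdd₂ M]

lemma measurable_map_const_add (ν : Measure M) [SFinite ν] :
    Measurable fun x : M => ν.map (x + ·) := by
  refine measurable_of_measurable_coe _ fun s hs => ?_
  simp_rw [map_apply (measurable_const_add _) hs]
  exact measurable_measure_prodMk_left (measurable_add hs)

lemma bind_map_const_add (μ ν : Measure M) [SFinite ν] :
    μ.bind (fun x => ν.map (x + ·)) = μ ∗ ν := by
  ext s hs
  rw [bind_apply hs (measurable_map_const_add ν).aemeasurable, ← lintegral_indicator_one hs,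
    lintegral_conv (measurable_one.indicator hs)]
  refine lintegral_congr fun x => ?_
  rw [map_apply (measurable_const_add x) hs, ← lintegral_indicator_one (measurable_const_add x hs)]
  rfl

end MeasureTheory.Measure

namespace ProbabilityTheory

lemma gaussianReal_map_affine (μ : ℝ) (v : ℝ≥0) (a b : ℝ) :
    (gaussianReal μ v).map (fun x => a * x + b)
      = gaussianReal (a * μ + b) (.mk (a ^ 2) (sq_nonneg a) * v) := by
  change (gaussianReal μ v).map ((· + b) ∘ (a * ·)) = _
  rw [← Measure.map_map (measurable_add_const b) (measurable_const_mul a),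
    gaussianReal_map_const_mul, gaussianReal_map_add_const]

lemma gaussianReal_bind_gaussianReal (μ : ℝ) (v₁ v₂ : ℝ≥0) :
    (gaussianReal μ v₁).bind (fun x => gaussianReal x v₂) = gaussianReal μ (v₁ + v₂) := by
  have h : (fun x => gaussianReal x v₂) = fun x => (gaussianReal 0 v₂).map (x + ·) := by
    funext x
    rw [gaussianReal_map_const_add, zero_add]
  rw [h, Measure.bind_map_const_add, gaussianReal_conv_gaussianReal, add_zero]

end ProbabilityTheory

/-- Scalar consistency identity of Proposition 1: for `|γ| ≤ 1`, drawing
`x ∼ N(m, v)` and then returning a sample from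
`N(γ x + (1−γ) m, (1−γ²) v)` yields exactly `N(m, v)`. -/
theorem gaussianReal_bind_gamma_family (m : ℝ) (v : ℝ≥0) (γ : ℝ)
    (hγ : |γ| ≤ 1) :
    (gaussianReal m v).bind
        (fun x => gaussianReal (γ * x + (1 - γ) * m)
          (Real.toNNReal (1 - γ ^ 2) * v))
      = gaussianReal m v := by
  set w := Real.toNNReal (1 - γ ^ 2) * v
  have hvar : (.mk (γ ^ 2) (sq_nonneg γ) : ℝ≥0) * v + w = v := by
    have hγ2 : γ ^ 2 ≤ 1 := sq_le_one_iff_abs_le_one γ |>.mpr hγ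
    ext
    push_cast [w, NNReal.coe_mk, Real.coe_toNNReal _ (sub_nonneg.mpr hγ2)]
    ring
  have hkernel : Measurable fun y => gaussianReal y w :=
    measurable_gaussianReal.comp (measurable_id.prodMk measurable_const)
  calc (gaussianReal m v).bind (fun x => gaussianReal (γ * x + (1 - γ) * m) w)
      = ((gaussianReal m v).map (fun x => γ * x + (1 - γ) * m)).bind
          (fun y => gaussianReal y w) :=
        (Measure.bind_map (by fun_prop) hkernel).symm
    _ = (gaussianReal m (.mk (γ ^ 2) (sq_nonneg γ) * v)).bind (fun y => gaussianReal y w) := by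
        rw [gaussianReal_map_affine, show γ * m + (1 - γ) * m = m by ring]
    _ = gaussianReal m v := by rw [gaussianReal_bind_gaussianReal, hvar]
end

section
/- Let q, n ∈ ℕ, let Φ be a real q×n matrix, let Λ be a real symmetric positive definite q×q matrix, and let σ > 0. Assume the n×n matrix Φᵀ Λ Φ + σ²·I is positive definite. Then the pushforward under the map (s, ε) ↦ Φᵀ·s + ε of the product of the multivariate Gaussian measure on ℝ^q with mean 0 and covariance Λ and the multivariate Gaussian measure on ℝⁿ with mean 0 and covariance σ²·I equals the multivariate Gaussian measure on ℝⁿ with mean 0 and covariance Φᵀ Λ Φ + σ²·I. -/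
/-!
For positive definite `S`, the density-defined `N(μ, S)` coincides with Mathlib's
`ProbabilityTheory.multivariateGaussian μ S`, the image of the standard Gaussian under
`x ↦ μ + √S x`: for `S = 1` the characteristic functions agree, and the general case follows by the
linear change of variables `x ↦ √S x` and a translation. For Mathlib's Gaussians the characteristic
function `exp (i⟪t, μ⟫ - tᵀ S t / 2)` shows that the image of `N(μ, S)` under `A` is
`N(A μ, A S Aᵀ)` and that `N(μ₁, S₁) ∗ N(μ₂, S₂) = N(μ₁ + μ₂, S₁ + S₂)`. The law of `Φᵀ s + ε` is
the convolution of the image of `N(0, Λ)` under `Φᵀ` with `N(0, σ² I)`.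
-/

open MeasureTheory ProbabilityTheory Matrix
open scoped NNReal

/-- The multivariate Gaussian probability measure on `d`-dimensional Euclidean
space with mean vector `μ` and (symmetric positive definite) covariance matrix
`S`, defined via its density with respect to Lebesgue measure. -/
noncomputable def multivariateGaussian {d : ℕ} (μ : EuclideanSpace ℝ (Fin d))
    (S : Matrix (Fin d) (Fin d) ℝ) :
    Measure (EuclideanSpace ℝ (Fin d)) :=
  MeasureTheory.volume.withDensity fun x =>
    ENNReal.ofReal ((Real.sqrt ((2 * Real.pi) ^ d * S.det))⁻¹ *
      Real.exp (-(1 / 2) *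
        ((fun i => (x - μ) i) ⬝ᵥ S⁻¹.mulVec fun i => (x - μ) i)))

open WithLp
open scoped RealInnerProductSpace

lemma MeasureTheory.Measure.map_withDensity_comp {α β : Type*} [MeasurableSpace α]
    [MeasurableSpace β] (μ : Measure α) {f : α → β} (hf : Measurable f) {g : β → ENNReal}
    (hg : Measurable g) :
    (μ.withDensity (g ∘ f)).map f = (μ.map f).withDensity g := by
  ext s hs
  rw [map_apply hf hs, withDensity_apply _ (hf hs), withDensity_apply _ hs,
    setLIntegral_map hs hg hf]
  rfl

lemma integrable_exp_neg_mul_sq_norm {V : Type*} [NormedAddCommGroup V] [InnerProductSpace ℝ V]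
    [FiniteDimensional ℝ V] [MeasurableSpace V] [BorelSpace V] {b : ℝ} (hb : 0 < b) :
    Integrable fun v : V => Real.exp (-b * ‖v‖ ^ 2) := by
  simpa [← Complex.ofReal_pow, ← Complex.ofReal_mul, ← Complex.ofReal_neg, Complex.norm_exp] using
    (GaussianFourier.integrable_cexp_neg_mul_sq_norm_add (V := V)
      (show 0 < (b : ℂ).re from hb) 0 0).norm

section

variable {ι κ : Type*} [Fintype ι] [Fintype κ] [DecidableEq ι] [DecidableEq κ]

lemma Matrix.inner_toEuclideanLin_left (A : Matrix κ ι ℝ) (x : EuclideanSpace ℝ ι)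
    (t : EuclideanSpace ℝ κ) : ⟪toEuclideanLin A x, t⟫ = ⟪x, toEuclideanLin Aᵀ t⟫ := by
  simp only [EuclideanSpace.inner_eq_star_dotProduct, star_trivial, ofLp_toLpLin, toLin'_apply,
    dotProduct_mulVec, vecMul_transpose, dotProduct_comm]

lemma MeasureTheory.charFun_map_toEuclideanLin (μ : Measure (EuclideanSpace ℝ ι))
    (A : Matrix κ ι ℝ) (t : EuclideanSpace ℝ κ) :
    charFun (μ.map (toEuclideanLin A)) t = charFun μ (toEuclideanLin Aᵀ t) := by
  rw [charFun_apply, charFun_apply, integral_map (by fun_prop) (by fun_prop)]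
  simp_rw [inner_toEuclideanLin_left]

namespace ProbabilityTheory

lemma multivariateGaussian_map_toEuclideanLin {μ : EuclideanSpace ℝ ι} {S : Matrix ι ι ℝ}
    (hS : S.PosSemidef) (A : Matrix κ ι ℝ) :
    (multivariateGaussian μ S).map (toEuclideanLin A)
      = multivariateGaussian (toEuclideanLin A μ) (A * S * Aᵀ) := by
  have hASA : (A * S * Aᵀ).PosSemidef := by
    simpa only [conjTranspose_eq_transpose_of_trivial] using hS.mul_mul_conjTranspose_same A
  have := Measure.isProbabilityMeasure_map (μ := multivariateGaussian μ S)
    (toEuclideanLin A).continuous_of_finiteDimensional.aemeasurable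
  refine Measure.ext_of_charFun (funext fun t => ?_)
  rw [charFun_map_toEuclideanLin, charFun_multivariateGaussian hS,
    charFun_multivariateGaussian hASA, real_inner_comm, ← inner_toEuclideanLin_left,
    real_inner_comm]
  simp only [ofLp_toLpLin, toLin'_apply, ← mulVec_mulVec, dotProduct_mulVec _ A, mulVec_transpose]

lemma multivariateGaussian_conv {μ₁ μ₂ : EuclideanSpace ℝ ι} {S₁ S₂ : Matrix ι ι ℝ}
    (h₁ : S₁.PosSemidef) (h₂ : S₂.PosSemidef) :
    multivariateGaussian μ₁ S₁ ∗ multivariateGaussian μ₂ S₂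
      = multivariateGaussian (μ₁ + μ₂) (S₁ + S₂) := by
  refine Measure.ext_of_charFun (funext fun t => ?_)
  rw [charFun_conv, charFun_multivariateGaussian h₁, charFun_multivariateGaussian h₂,
    charFun_multivariateGaussian (h₁.add h₂), ← Complex.exp_add]
  congr 1
  simp only [inner_add_right, add_mulVec, dotProduct_add]
  push_cast
  ring

lemma multivariateGaussian_eq_map_add (μ : EuclideanSpace ℝ ι) (S : Matrix ι ι ℝ) :
    multivariateGaussian μ S = (multivariateGaussian 0 S).map (μ + ·) := by
  simp only [multivariateGaussian, zero_add]
  rw [Measure.map_map (by fun_prop) (by fun_prop)]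
  rfl

end ProbabilityTheory

end

noncomputable def centeredGaussianPDF {ι : Type*} [Fintype ι] [DecidableEq ι]
    (S : Matrix ι ι ℝ) (x : ι → ℝ) : ℝ :=
  (√((2 * Real.pi) ^ Fintype.card ι * S.det))⁻¹ * Real.exp (-(1 / 2) * (x ⬝ᵥ S⁻¹ *ᵥ x))

section centeredGaussianPDF

variable {ι : Type*} [Fintype ι] [DecidableEq ι]

lemma centeredGaussianPDF_nonneg (S : Matrix ι ι ℝ) (x : ι → ℝ) : 0 ≤ centeredGaussianPDF S x := by
  unfold centeredGaussianPDF
  positivity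

@[fun_prop]
lemma continuous_centeredGaussianPDF (S : Matrix ι ι ℝ) : Continuous (centeredGaussianPDF S) := by
  unfold centeredGaussianPDF
  fun_prop

lemma centeredGaussianPDF_one_ofLp (x : EuclideanSpace ℝ ι) :
    centeredGaussianPDF (1 : Matrix ι ι ℝ) (ofLp x)
      = ((2 * Real.pi) ^ (Fintype.card ι / 2 : ℝ))⁻¹ * Real.exp (-(1 / 2) * ‖x‖ ^ 2) := by
  rw [centeredGaussianPDF, det_one, mul_one, inv_one, one_mulVec, Real.sqrt_eq_rpow,
    ← Real.rpow_natCast, ← Real.rpow_mul (by positivity), EuclideanSpace.real_norm_sq_eq]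
  simp only [dotProduct, mul_one_div, sq]

lemma abs_det_inv_mul_centeredGaussianPDF_inv_mulVec (A : Matrix ι ι ℝ) {S : Matrix ι ι ℝ}
    (hS : 0 ≤ S.det) (y : ι → ℝ) :
    |A.det|⁻¹ * centeredGaussianPDF S (A⁻¹ *ᵥ y) = centeredGaussianPDF (A * S * Aᵀ) y := by
  have hnorm : √((2 * Real.pi) ^ Fintype.card ι * (A * S * Aᵀ).det)
      = √((2 * Real.pi) ^ Fintype.card ι * S.det) * |A.det| := by
    rw [det_mul, det_mul, det_transpose, ← Real.sqrt_sq_eq_abs, ← Real.sqrt_mul (by positivity)]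
    ring_nf
  have hquad : (A⁻¹ *ᵥ y) ⬝ᵥ S⁻¹ *ᵥ (A⁻¹ *ᵥ y) = y ⬝ᵥ (A * S * Aᵀ)⁻¹ *ᵥ y := by
    rw [Matrix.mul_inv_rev, Matrix.mul_inv_rev, ← transpose_nonsing_inv, ← mulVec_mulVec,
      ← mulVec_mulVec, dotProduct_mulVec y, vecMul_transpose]
  rw [centeredGaussianPDF, centeredGaussianPDF, hnorm, hquad, mul_inv]
  ring

end centeredGaussianPDF

section multivariateGaussian

variable {d : ℕ}

lemma multivariateGaussian_zero_eq_withDensity (S : Matrix (Fin d) (Fin d) ℝ) :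
    _root_.multivariateGaussian 0 S
      = volume.withDensity fun x => ENNReal.ofReal (centeredGaussianPDF S (ofLp x)) := by
  simp only [_root_.multivariateGaussian, centeredGaussianPDF, sub_zero, Fintype.card_fin]

lemma multivariateGaussian_eq_map_add (μ : EuclideanSpace ℝ (Fin d))
    (S : Matrix (Fin d) (Fin d) ℝ) :
    _root_.multivariateGaussian μ S = (_root_.multivariateGaussian 0 S).map (μ + ·) := by
  have hpull : (fun x : EuclideanSpace ℝ (Fin d) => ENNReal.ofReal (centeredGaussianPDF S (ofLp x)))
      = (fun y => ENNReal.ofReal (centeredGaussianPDF S (ofLp (y - μ)))) ∘ (μ + ·) := by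
    ext x
    simp
  rw [multivariateGaussian_zero_eq_withDensity, hpull,
    Measure.map_withDensity_comp _ (by fun_prop) (by fun_prop),
    Measure.IsAddLeftInvariant.map_add_left_eq_self]
  simp only [_root_.multivariateGaussian, centeredGaussianPDF, Fintype.card_fin]

lemma charFun_multivariateGaussian_zero_one (t : EuclideanSpace ℝ (Fin d)) :
    charFun (_root_.multivariateGaussian 0 (1 : Matrix (Fin d) (Fin d) ℝ)) t
      = Complex.exp (-‖t‖ ^ 2 / 2) := by
  rw [multivariateGaussian_zero_eq_withDensity, charFun_apply,
    integral_withDensity_eq_integral_toReal_smul (by fun_prop)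
      (.of_forall fun _ => ENNReal.ofReal_lt_top)]
  simp_rw [ENNReal.toReal_ofReal (centeredGaussianPDF_nonneg _ _), centeredGaussianPDF_one_ofLp,
    Complex.real_smul, real_inner_comm t, Complex.ofReal_mul, Complex.ofReal_exp, mul_assoc,
    ← Complex.exp_add]
  have hnormalize : ((((2 * Real.pi) ^ ((Fintype.card (Fin d) : ℝ) / 2))⁻¹ : ℝ) : ℂ)
      * (Real.pi / (1 / 2 : ℂ)) ^ (Fintype.card (Fin d) / 2 : ℂ) = 1 := by
    rw [show (Real.pi / (1 / 2 : ℂ)) = ((2 * Real.pi : ℝ) : ℂ) by push_cast; ring,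
      ← Complex.ofReal_natCast, ← Complex.ofReal_ofNat, ← Complex.ofReal_div,
      ← Complex.ofReal_cpow (by positivity), ← Complex.ofReal_mul,
      inv_mul_cancel₀ (by positivity), Complex.ofReal_one]
  have hgauss := GaussianFourier.integral_cexp_neg_mul_sq_norm_add_of_euclideanSpace
    (b := 1 / 2) (by norm_num) Complex.I t
  rw [integral_const_mul, ← one_mul (Complex.exp _), ← hnormalize, mul_assoc]
  congr 1
  refine (integral_congr_ae (.of_forall fun v => ?_)).trans (hgauss.trans ?_)
  · push_cast
    ring_nf
  · rw [Complex.I_sq]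
    ring_nf

lemma multivariateGaussian_zero_one :
    _root_.multivariateGaussian 0 (1 : Matrix (Fin d) (Fin d) ℝ)
      = stdGaussian (EuclideanSpace ℝ (Fin d)) := by
  have hint : Integrable fun v : EuclideanSpace ℝ (Fin d) => centeredGaussianPDF 1 (ofLp v) := by
    simp_rw [centeredGaussianPDF_one_ofLp]
    exact (integrable_exp_neg_mul_sq_norm (by norm_num)).const_mul _
  have : IsFiniteMeasure (_root_.multivariateGaussian 0 (1 : Matrix (Fin d) (Fin d) ℝ)) := by
    rw [multivariateGaussian_zero_eq_withDensity]
    exact isFiniteMeasure_withDensity_ofReal hint.2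
  refine Measure.ext_of_charFun (funext fun t => ?_)
  rw [charFun_stdGaussian, charFun_multivariateGaussian_zero_one]

lemma map_toEuclideanLin_multivariateGaussian_zero {A : Matrix (Fin d) (Fin d) ℝ} (hA : IsUnit A)
    {S : Matrix (Fin d) (Fin d) ℝ} (hS : 0 ≤ S.det) :
    (_root_.multivariateGaussian 0 S).map (toEuclideanLin A)
      = _root_.multivariateGaussian 0 (A * S * Aᵀ) := by
  have hdet : IsUnit A.det := (isUnit_iff_isUnit_det A).mp hA
  have hpull : (fun x : EuclideanSpace ℝ (Fin d) => ENNReal.ofReal (centeredGaussianPDF S (ofLp x)))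
      = (fun y => ENNReal.ofReal (centeredGaussianPDF S (A⁻¹ *ᵥ ofLp y))) ∘ toEuclideanLin A := by
    ext x
    simp [ofLp_toLpLin, mulVec_mulVec, nonsing_inv_mul A hdet]
  rw [multivariateGaussian_zero_eq_withDensity, multivariateGaussian_zero_eq_withDensity, hpull,
    Measure.map_withDensity_comp _ (by fun_prop) (by fun_prop),
    Measure.map_linearMap_addHaar_eq_smul_addHaar _ (by simpa using hdet.ne_zero),
    withDensity_smul_measure, ← withDensity_smul' _ _ ENNReal.ofReal_ne_top]
  congr 1
  ext y
  rw [Pi.smul_apply, smul_eq_mul, LinearMap.det_toLpLin, abs_inv,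
    ← ENNReal.ofReal_mul (by positivity), abs_det_inv_mul_centeredGaussianPDF_inv_mulVec A hS]

open scoped MatrixOrder in
lemma multivariateGaussian_zero_eq_probabilityTheory_multivariateGaussian
    {S : Matrix (Fin d) (Fin d) ℝ} (hS : S.PosDef) :
    _root_.multivariateGaussian 0 S = ProbabilityTheory.multivariateGaussian 0 S := by
  set B := CFC.sqrt S
  have hsq : B * B = S := CFC.sqrt_mul_sqrt_self S hS.posSemidef.nonneg
  have hsymm : Bᵀ = B := (CFC.sqrt_nonneg S).posSemidef.isHermitian.eq
  have hunit : IsUnit B := isUnit_of_mul_isUnit_left (hsq ▸ hS.isUnit)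
  calc _ = _root_.multivariateGaussian 0 (B * 1 * Bᵀ) := by rw [mul_one, hsymm, hsq]
    _ = (stdGaussian _).map (toEuclideanLin B) := by
      rw [← map_toEuclideanLin_multivariateGaussian_zero hunit (by simp),
        multivariateGaussian_zero_one]
    _ = _ := by
      simp only [ProbabilityTheory.multivariateGaussian, zero_add]
      rfl

lemma multivariateGaussian_eq_probabilityTheory_multivariateGaussian
    (μ : EuclideanSpace ℝ (Fin d)) {S : Matrix (Fin d) (Fin d) ℝ} (hS : S.PosDef) :
    _root_.multivariateGaussian μ S = ProbabilityTheory.multivariateGaussian μ S := by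
  rw [_root_.multivariateGaussian_eq_map_add, ProbabilityTheory.multivariateGaussian_eq_map_add,
    multivariateGaussian_zero_eq_probabilityTheory_multivariateGaussian hS]

end multivariateGaussian

theorem map_affine_noise_multivariateGaussian_general (q n : ℕ)
    (Φ : Matrix (Fin q) (Fin n) ℝ) (Λ : Matrix (Fin q) (Fin q) ℝ)
    (hΛ : Λ.PosDef) (σ : ℝ) (hσ : 0 < σ) :
    Measure.map
        (fun p : EuclideanSpace ℝ (Fin q) × EuclideanSpace ℝ (Fin n) =>
          (WithLp.equiv 2 (Fin n → ℝ)).symm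
            (Φᵀ.mulVec (WithLp.equiv 2 (Fin q → ℝ) p.1)
              + WithLp.equiv 2 (Fin n → ℝ) p.2))
        ((_root_.multivariateGaussian 0 Λ).prod
          (_root_.multivariateGaussian 0 (σ ^ 2 • (1 : Matrix (Fin n) (Fin n) ℝ))))
      = _root_.multivariateGaussian 0
          (Φᵀ * Λ * Φ + σ ^ 2 • (1 : Matrix (Fin n) (Fin n) ℝ)) := by
  have hsignal : (Φᵀ * Λ * Φ).PosSemidef := by
    simpa using hΛ.posSemidef.mul_mul_conjTranspose_same Φᵀ
  have hnoise : (σ ^ 2 • (1 : Matrix (Fin n) (Fin n) ℝ)).PosDef := PosDef.one.smul (by positivity)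
  rw [multivariateGaussian_eq_probabilityTheory_multivariateGaussian 0 hΛ,
    multivariateGaussian_eq_probabilityTheory_multivariateGaussian 0 hnoise,
    multivariateGaussian_eq_probabilityTheory_multivariateGaussian 0
      (PosDef.posSemidef_add hsignal hnoise)]
  change Measure.map ((fun p => p.1 + p.2) ∘ Prod.map (toEuclideanLin Φᵀ) id) _ = _
  rw [← Measure.map_map (by fun_prop) (by fun_prop),
    ← Measure.map_prod_map _ _ (by fun_prop) measurable_id, Measure.map_id,
    multivariateGaussian_map_toEuclideanLin hΛ.posSemidef, transpose_transpose, map_zero]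
  exact (multivariateGaussian_conv hsignal hnoise.posSemidef).trans (by rw [add_zero])

/-- Gaussian marginalization identity of Appendix E: if `s ∼ N(0, Λ)` and
independently `ε ∼ N(0, σ² I)`, then `Φᵀ s + ε ∼ N(0, Φᵀ Λ Φ + σ² I)`. -/
theorem map_affine_noise_multivariateGaussian (q n : ℕ)
    (Φ : Matrix (Fin q) (Fin n) ℝ) (Λ : Matrix (Fin q) (Fin q) ℝ)
    (hΛ : Λ.PosDef) (σ : ℝ) (hσ : 0 < σ)
    (hPD : (Φᵀ * Λ * Φ + σ ^ 2 • (1 : Matrix (Fin n) (Fin n) ℝ)).PosDef) :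
    Measure.map
        (fun p : EuclideanSpace ℝ (Fin q) × EuclideanSpace ℝ (Fin n) =>
          (WithLp.equiv 2 (Fin n → ℝ)).symm
            (Φᵀ.mulVec (WithLp.equiv 2 (Fin q → ℝ) p.1)
              + WithLp.equiv 2 (Fin n → ℝ) p.2))
        ((_root_.multivariateGaussian 0 Λ).prod
          (_root_.multivariateGaussian 0 (σ ^ 2 • (1 : Matrix (Fin n) (Fin n) ℝ))))
      = _root_.multivariateGaussian 0
          (Φᵀ * Λ * Φ + σ ^ 2 • (1 : Matrix (Fin n) (Fin n) ℝ)) :=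
  map_affine_noise_multivariateGaussian_general q n Φ Λ hΛ σ hσ
end
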